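/- Let ω: ℝ → ℝ be a convex function. Then for all real numbers a, b, c, d, ω(|max(a,c) − max(b,d)|) + ω(|min(a,c) − min(b,d)|) ≤ ω(|a−b|) + ω(|c−d|), provided ω is even (ω(t) = ω(−t)), i.e. writing ω(x−y) for ω(|x−y|): ω(max(a,c) − max(b,d)) + ω(min(a,c) − min(b,d)) ≤ ω(a−b) + ω(c−d). -/

import Mathlib

private lemma convex_pair_aux (ω : ℝ → ℝ) (hconv : ConvexOn ℝ Set.univ ω)
    {u v x y : ℝ} (h1 : v ≤ x) (h2 : x ≤ u) (hsum : x + y = u + v) :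
    ω x + ω y ≤ ω u + ω v := by
  rcases eq_or_lt_of_le (h1.trans h2) with h | h
  · have hx : x = u := le_antisymm h2 (h ▸ h1)
    have hy : y = v := by linarith
    rw [hx, hy]
  · set t : ℝ := (x - v) / (u - v) with ht
    have hd : (0:ℝ) < u - v := by linarith
    have ht0 : 0 ≤ t := div_nonneg (by linarith) hd.le
    have ht1 : t ≤ 1 := (div_le_one hd).2 (by linarith)
    have hs : t + (1 - t) = 1 := by ring
    have hx : x = t * u + (1 - t) * v := by
      have h' : t * (u - v) = x - v := div_mul_cancel₀ (x - v) hd.ne'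
      linear_combination -h'
    have hy : y = (1 - t) * u + t * v := by
      have : y = u + v - x := by linarith
      rw [this, hx]; ring
    have hω1 := hconv.2 (Set.mem_univ u) (Set.mem_univ v) ht0 (by linarith) hs
    have hω2 := hconv.2 (Set.mem_univ u) (Set.mem_univ v) (by linarith : (0:ℝ) ≤ 1 - t) ht0
      (by ring)
    simp only [smul_eq_mul] at hω1 hω2
    calc ω x + ω y = ω (t * u + (1-t) * v) + ω ((1-t) * u + t * v) := by rw [hx, hy]
      _ ≤ (t * ω u + (1-t) * ω v) + ((1-t) * ω u + t * ω v) := add_le_add hω1 hω2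
      _ = ω u + ω v := by ring

/-- Submodularity of `(x,y) ↦ ω(x−y)` for an even convex `ω` (FKG lattice condition,
equation (convo) of the paper). -/
theorem sos_fkg_submodular (ω : ℝ → ℝ) (hconv : ConvexOn ℝ Set.univ ω)
    (heven : ∀ t : ℝ, ω t = ω (-t)) (a b c d : ℝ) :
    ω (max a c - max b d) + ω (min a c - min b d) ≤ ω (a - b) + ω (c - d) := by
  rcases le_total a c with hac | hac <;> rcases le_total b d with hbd | hbd
  · rw [max_eq_right hac, min_eq_left hac, max_eq_right hbd, min_eq_left hbd, add_comm]
  · rw [max_eq_right hac, min_eq_left hac, max_eq_left hbd, min_eq_right hbd]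
    have := convex_pair_aux ω hconv (u := c - d) (v := a - b) (x := c - b) (y := a - d)
      (by linarith) (by linarith) (by ring)
    linarith
  · rw [max_eq_left hac, min_eq_right hac, max_eq_right hbd, min_eq_left hbd]
    have := convex_pair_aux ω hconv (u := a - b) (v := c - d) (x := a - d) (y := c - b)
      (by linarith) (by linarith) (by ring)
    linarith
  · rw [max_eq_left hac, min_eq_right hac, max_eq_left hbd, min_eq_right hbd]
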